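/- arXiv:2212.06819 — 2 statements merged into one kernel-verified Lean document; each statement's English description precedes it below -/
import Mathlib

section
/- Let M = (S, I) be a matroid of rank n on a finite set S, linearly represented over a field K by a map R : E → F where (e_i)_{i∈S} is a basis of E (i.e., I ∈ I iff {R(e_i) : i∈I} is linearly independent), and let Z = ker R, of dimension b = |S| − n. For each basis T of M and each j ∈ S∖T, let γ(T,j) be the unique element of Z giving coefficient 1 to e_j and supported on T ∪ {j}. Then (a) the family Z_T = {γ(T,j) : j ∈ S∖T} is a linear basis of Z, and (b) for any basis 𝒵 = (γ_1,…,γ_b) of Z, one has γ_1 ∧ … ∧ γ_b = Σ_{T basis of M} det(𝒵/𝒵_T) · e_{T^c} in ⋀^b E, where e_{T^c} is the wedge (in a fixed order on S) of the e_j with j ∉ T and det(𝒵/𝒵_T) is the change-of-basis determinant. -/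
/-! Framework: a linear matroid on a finite linearly ordered set `S`, represented over
a field `𝕂` by `R : E → F` with `E = S → 𝕂` (basis `(e_i) = (Pi.single i 1)`), kernel
`Z = ker R`. -/

section Matroid

variable {𝕂 : Type*} [Field 𝕂] {S : Type*} [Fintype S] [DecidableEq S] [LinearOrder S]
  {F : Type*} [AddCommGroup F] [Module 𝕂 F]

/-- `T` is a basis of the matroid represented by `R`: `T` is independent (the images of
the corresponding basis vectors are linearly independent) of maximal cardinality
`n = rk(M) = dim im R`. -/
def IsMBasis (R : (S → 𝕂) →ₗ[𝕂] F) (T : Finset S) : Prop :=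
  T.card = Module.finrank 𝕂 (LinearMap.range R) ∧
  LinearIndependent 𝕂 (fun i : T => R (Pi.single (i : S) 1))

/-- Wedge of a list of vectors of `E`, in the exterior algebra. -/
noncomputable def listWedge (l : List (S → 𝕂)) : ExteriorAlgebra 𝕂 (S → 𝕂) :=
  (l.map (fun c => ExteriorAlgebra.ι 𝕂 c)).prod

/-- The wedge `e_A` of the canonical basis vectors indexed by `A`, in the fixed
order on `S`. -/
noncomputable def eWedge (A : Finset S) : ExteriorAlgebra 𝕂 (S → 𝕂) :=
  listWedge ((A.sort (· ≤ ·)).map (fun i => (Pi.single i (1 : 𝕂) : S → 𝕂)))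

/-- The wedge `γ₁ ∧ … ∧ γₙ` of a finite family of vectors. -/
noncomputable def famWedge {n : ℕ} (γ : Fin n → (S → 𝕂)) :
    ExteriorAlgebra 𝕂 (S → 𝕂) :=
  listWedge ((List.finRange n).map γ)

/-- The change-of-basis determinant `det(𝒵/𝒵_T)` between a basis `γ` of `Z` and the
fundamental basis `𝒵_T = (γ(T,j))_{j ∉ T}`: since `γ(T,j)` is the unique fundamental
basis vector with a (unit) coordinate on `j ∉ T`, this is the determinant of the matrix
of coordinates of the `γᵢ` outside `T` (in the fixed order on `S`). -/
noncomputable def cbDet {n : ℕ} (γ : Fin n → (S → 𝕂)) (T : Finset S) : 𝕂 :=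
  if h : ((Tᶜ : Finset S).sort (· ≤ ·)).length = n then
    Matrix.det (Matrix.of fun i j : Fin n =>
      γ j (((Tᶜ : Finset S).sort (· ≤ ·)).get (Fin.cast h.symm i)))
  else 0

end Matroid

/-! Expanding `γ₁ ∧ ⋯ ∧ γ_b` in the basis `(e_A)_{|A| = b}` of `⋀^b E`, the coefficient of `e_A`
is the `b × b` minor of the coordinates of the `γᵢ` on `A`, which is `det(𝒵/𝒵_{Aᶜ})`. If `Aᶜ` is
not a basis of the matroid, some nonzero `z ∈ Z = span γ` is supported on `Aᶜ`; its coefficient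
vector is a nonzero kernel vector of that minor, so the term vanishes. For (a), the `γ(T,j)`
restrict on `Tᶜ` to the standard basis of `𝕂^{Tᶜ}`, and there are `|Tᶜ| = dim Z` of them by
rank–nullity. -/

lemma apply_eq_pi_single_of_notMem {𝕂 S : Type*} [Field 𝕂] [DecidableEq S] {T : Finset S}
    {j : S} {c : S → 𝕂} (hj : c j = 1) (hoff : ∀ i, i ∉ T → i ≠ j → c i = 0) {i : S} (hi : i ∉ T) :
    c i = (Pi.single j 1 : S → 𝕂) i := by
  rcases eq_or_ne i j with rfl | hij
  · rw [Pi.single_eq_same, hj]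
  · rw [Pi.single_eq_of_ne hij, hoff i hi hij]

section Representation

variable {𝕂 : Type*} [Field 𝕂] {S : Type*} [Fintype S] [DecidableEq S]
  {F : Type*} [AddCommGroup F] [Module 𝕂 F]

lemma linearIndependent_of_eq_single_on_compl (T : Finset S) {v : (Tᶜ : Finset S) → S → 𝕂}
    (hv : ∀ (j : (Tᶜ : Finset S)) (i : S), i ∉ T → v j i = (Pi.single (j : S) 1 : S → 𝕂) i) :
    LinearIndependent 𝕂 v := by
  refine LinearIndependent.of_comp (LinearMap.funLeft 𝕂 𝕂 ((↑) : (Tᶜ : Finset S) → S)) ?_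
  convert Pi.linearIndependent_single_one (Tᶜ : Finset S) 𝕂 with j
  funext i
  rw [Function.comp_apply, LinearMap.funLeft_apply, hv j i (Finset.mem_compl.mp i.2)]
  simp only [Pi.single_apply, Subtype.ext_iff]

lemma linearIndependent_map_single_iff_disjoint (R : (S → 𝕂) →ₗ[𝕂] F) (T : Finset S) :
    LinearIndependent 𝕂 (fun i : T => R (Pi.single (i : S) 1)) ↔
      Disjoint (Pi.spanSubset 𝕂 (T : Set S)) (LinearMap.ker R) := by
  have hspan : Submodule.span 𝕂 (Set.range fun i : T => (Pi.single (i : S) 1 : S → 𝕂)) =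
      Pi.spanSubset 𝕂 (T : Set S) := by
    simp [Pi.spanSubset, Set.image_eq_range]
  rw [← hspan]
  exact ⟨Submodule.range_ker_disjoint,
    ((Pi.linearIndependent_single_one S 𝕂).comp _ Subtype.val_injective).map⟩

lemma card_compl_eq_finrank_ker_iff (R : (S → 𝕂) →ₗ[𝕂] F) (T : Finset S) :
    Tᶜ.card = Module.finrank 𝕂 (LinearMap.ker R) ↔
      T.card = Module.finrank 𝕂 (LinearMap.range R) := by
  have hrank := LinearMap.finrank_range_add_finrank_ker R
  rw [Module.finrank_fintype_fun_eq_card] at hrank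
  have hcard := Finset.card_add_card_compl T
  omega

lemma isMBasis_iff_card_compl_and_disjoint (R : (S → 𝕂) →ₗ[𝕂] F) (T : Finset S) :
    IsMBasis R T ↔ Tᶜ.card = Module.finrank 𝕂 (LinearMap.ker R) ∧
      Disjoint (Pi.spanSubset 𝕂 (T : Set S)) (LinearMap.ker R) := by
  rw [IsMBasis, card_compl_eq_finrank_ker_iff, linearIndependent_map_single_iff_disjoint]

variable {R : (S → 𝕂) →ₗ[𝕂] F} {T : Finset S}

lemma IsMBasis.eq_zero_of_mem_ker (hT : IsMBasis R T) {w : S → 𝕂} (hw : R w = 0)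
    (hsupp : ∀ s ∉ T, w s = 0) : w = 0 :=
  Submodule.disjoint_def.mp ((isMBasis_iff_card_compl_and_disjoint R T).mp hT).2 w
    (Pi.mem_spanSubset_iff.mpr hsupp) hw

lemma IsMBasis.linearIndependent_and_span_eq_ker (hT : IsMBasis R T)
    {v : (Tᶜ : Finset S) → S → 𝕂} (hker : ∀ j, R (v j) = 0)
    (hv : ∀ (j : (Tᶜ : Finset S)) (i : S), i ∉ T → v j i = (Pi.single (j : S) 1 : S → 𝕂) i) :
    LinearIndependent 𝕂 v ∧ Submodule.span 𝕂 (Set.range v) = LinearMap.ker R := by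
  have hindep := linearIndependent_of_eq_single_on_compl T hv
  refine ⟨hindep, Submodule.eq_of_le_of_finrank_le ?_ ?_⟩
  · rw [Submodule.span_le]
    rintro _ ⟨j, rfl⟩
    exact hker j
  · rw [finrank_span_eq_card hindep, Fintype.card_coe,
      ((isMBasis_iff_card_compl_and_disjoint R T).mp hT).1]

end Representation

lemma sum_powersetCard_eq_sum {S M : Type*} [Fintype S] [AddCommMonoid M] {n : ℕ}
    (F : Finset S → M) (hF : ∀ A : Finset S, A.card ≠ n → F A = 0) :
    ∑ s : Set.powersetCard S n, F s = ∑ A, F A := by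
  rw [← Finset.sum_subtype (Finset.univ.filter (·.card = n)) (by simp [Set.powersetCard.mem_iff]),
    Finset.sum_filter_of_ne fun A _ hA => by_contra fun h => hA (hF A h)]

section Expansion

variable {𝕂 : Type*} [Field 𝕂] {S : Type*}

lemma famWedge_eq_ιMulti {n : ℕ} (γ : Fin n → (S → 𝕂)) :
    famWedge γ = ExteriorAlgebra.ιMulti 𝕂 n γ := by
  rw [ExteriorAlgebra.ιMulti_apply, famWedge, listWedge, List.map_map, List.ofFn_eq_map]
  rfl

variable [DecidableEq S] [LinearOrder S]

lemma eWedge_eq_ιMulti {n : ℕ} (A : Finset S) (h : A.card = n) :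
    eWedge A = ExteriorAlgebra.ιMulti 𝕂 n (fun i => Pi.single (A.orderEmbOfFin h i) 1) := by
  subst h
  rw [ExteriorAlgebra.ιMulti_apply, eWedge, listWedge, List.map_map]
  conv_lhs => rw [← List.ofFn_get (A.sort (· ≤ ·)), List.map_ofFn]
  rw [List.ofFn_congr (Finset.length_sort _)]
  rfl

variable [Fintype S]

lemma coe_exteriorPower_basisFun_apply {n : ℕ} (s : Set.powersetCard S n) :
    (((Pi.basisFun 𝕂 S).exteriorPower n s : ⋀[𝕂]^n (S → 𝕂)) : ExteriorAlgebra 𝕂 (S → 𝕂)) =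
      eWedge (s : Finset S) := by
  rw [exteriorPower.basis_apply, exteriorPower.ιMulti_family_apply_coe,
    eWedge_eq_ιMulti _ (Set.powersetCard.card_eq s), ExteriorAlgebra.ιMulti_family]
  congr 1
  funext i
  exact Pi.basisFun_apply _ _ _

lemma cbDet_eq_det {n : ℕ} (γ : Fin n → (S → 𝕂)) {T A : Finset S} (hA : Tᶜ = A)
    (h : A.card = n) :
    cbDet γ T = (Matrix.of fun i j => γ j (A.orderEmbOfFin h i)).det := by
  subst hA
  rw [cbDet, dif_pos (by rw [Finset.length_sort, h])]
  rfl

lemma cbDet_eq_zero_of_card_ne {n : ℕ} (γ : Fin n → (S → 𝕂)) {T : Finset S}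
    (h : Tᶜ.card ≠ n) : cbDet γ T = 0 := by
  rw [cbDet, dif_neg (by rwa [Finset.length_sort])]

lemma repr_ιMulti_eq_cbDet {n : ℕ} (γ : Fin n → (S → 𝕂)) (s : Set.powersetCard S n) :
    ((Pi.basisFun 𝕂 S).exteriorPower n).repr (exteriorPower.ιMulti 𝕂 n γ) s =
      cbDet γ (s : Finset S)ᶜ := by
  rw [exteriorPower.basis_repr_apply, exteriorPower.ιMultiDual_apply_ιMulti,
    cbDet_eq_det γ (compl_compl _) (Set.powersetCard.card_eq s), ← Matrix.det_transpose]
  rfl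

lemma famWedge_eq_sum_cbDet_smul_eWedge {n : ℕ} (γ : Fin n → (S → 𝕂)) :
    famWedge γ = ∑ T : Finset S, cbDet γ T • eWedge Tᶜ := by
  let e := (Pi.basisFun 𝕂 S).exteriorPower n
  calc famWedge γ = ((∑ s, e.repr (exteriorPower.ιMulti 𝕂 n γ) s • e s : ⋀[𝕂]^n (S → 𝕂)) :
        ExteriorAlgebra 𝕂 (S → 𝕂)) := by rw [e.sum_repr, famWedge_eq_ιMulti]; rfl
    _ = ∑ s : Set.powersetCard S n, cbDet γ (s : Finset S)ᶜ • eWedge (s : Finset S) := by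
        push_cast
        refine Finset.sum_congr rfl fun s _ => ?_
        rw [repr_ιMulti_eq_cbDet, coe_exteriorPower_basisFun_apply]
    _ = ∑ A : Finset S, cbDet γ Aᶜ • eWedge A :=
        sum_powersetCard_eq_sum (fun A => cbDet γ Aᶜ • eWedge A) fun A hA => by
          rw [cbDet_eq_zero_of_card_ne γ (by rwa [compl_compl]), zero_smul]
    _ = ∑ T : Finset S, cbDet γ T • eWedge Tᶜ :=
        Fintype.sum_bijective compl compl_involutive.bijective _ _ fun A => by rw [compl_compl]

end Expansion

section Vanishing

variable {𝕂 : Type*} [Field 𝕂] {S : Type*} [Fintype S] [DecidableEq S] [LinearOrder S]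
  {F : Type*} [AddCommGroup F] [Module 𝕂 F] {n : ℕ} {γ : Fin n → S → 𝕂} {T : Finset S}

lemma cbDet_eq_zero_of_sum_smul_mem_spanSubset {d : Fin n → 𝕂} (hd : d ≠ 0)
    (h : ∑ j, d j • γ j ∈ Pi.spanSubset 𝕂 (T : Set S)) : cbDet γ T = 0 := by
  by_cases hcard : Tᶜ.card = n
  · rw [cbDet_eq_det γ rfl hcard, ← Matrix.exists_mulVec_eq_zero_iff]
    refine ⟨d, hd, funext fun i => ?_⟩
    have hi := Pi.mem_spanSubset_iff.mp h _
      (Finset.mem_compl.mp (Finset.orderEmbOfFin_mem Tᶜ hcard i))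
    simpa [Matrix.mulVec, dotProduct, Finset.sum_apply, mul_comm] using hi
  · exact cbDet_eq_zero_of_card_ne γ hcard

lemma cbDet_eq_zero_of_not_isMBasis {R : (S → 𝕂) →ₗ[𝕂] F}
    (hn : Module.finrank 𝕂 (LinearMap.ker R) = n)
    (hγ : Submodule.span 𝕂 (Set.range γ) = LinearMap.ker R) (hT : ¬ IsMBasis R T) :
    cbDet γ T = 0 := by
  by_cases hcard : Tᶜ.card = n
  · rw [isMBasis_iff_card_compl_and_disjoint, hn, Submodule.disjoint_def] at hT
    push Not at hT
    obtain ⟨w, hw_supp, hw_ker, hw⟩ := hT hcard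
    rw [← hγ, Submodule.mem_span_range_iff_exists_fun] at hw_ker
    obtain ⟨d, rfl⟩ := hw_ker
    refine cbDet_eq_zero_of_sum_smul_mem_spanSubset ?_ hw_supp
    rintro rfl
    simp at hw
  · exact cbDet_eq_zero_of_card_ne γ hcard

end Vanishing

open Classical

theorem circuit_basis_identity_general
    {𝕂 : Type*} [Field 𝕂] {S : Type*} [Fintype S] [DecidableEq S] [LinearOrder S]
    {F : Type*} [AddCommGroup F] [Module 𝕂 F]
    (R : (S → 𝕂) →ₗ[𝕂] F)
    (b : ℕ) (hb : Module.finrank 𝕂 (LinearMap.ker R) = b)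
    -- the fundamental circuit elements `γ(T,j)`
    (g : Finset S → S → (S → 𝕂))
    (hg : ∀ T j, IsMBasis R T → j ∉ T →
      R (g T j) = 0 ∧ g T j j = 1 ∧ ∀ i, i ∉ T → i ≠ j → g T j i = 0)
    -- a basis `𝒵` of `Z = ker R`
    (γ : Fin b → (S → 𝕂))
    (hγ_span : Submodule.span 𝕂 (Set.range γ) = LinearMap.ker R) :
    -- uniqueness of the fundamental circuit elements
    (∀ T j, IsMBasis R T → j ∉ T →
      ∀ c : S → 𝕂, R c = 0 → c j = 1 → (∀ i, i ∉ T → i ≠ j → c i = 0) →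
        c = g T j) ∧
    -- (a) `𝒵_T` is a linear basis of `Z`
    (∀ T : Finset S, IsMBasis R T →
      LinearIndependent 𝕂 (fun j : (Tᶜ : Finset S) => g T j) ∧
      Submodule.span 𝕂 (Set.range (fun j : (Tᶜ : Finset S) => g T (j : S))) =
        LinearMap.ker R) ∧
    -- (b) the circuit–basis identity
    famWedge γ =
      ∑ T : Finset S,
        if IsMBasis R T then cbDet γ T • eWedge (Tᶜ : Finset S) else 0 := by
  have hg_single : ∀ T j, IsMBasis R T → j ∉ T →
      ∀ i ∉ T, g T j i = (Pi.single j 1 : S → 𝕂) i :=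
    fun T j hT hj _ => apply_eq_pi_single_of_notMem (hg T j hT hj).2.1 (hg T j hT hj).2.2
  refine ⟨fun T j hT hj c hc hcj hcoff => ?_, fun T hT => ?_, ?_⟩
  · refine sub_eq_zero.mp (hT.eq_zero_of_mem_ker ?_ fun i hi => ?_)
    · rw [map_sub, hc, (hg T j hT hj).1, sub_zero]
    · rw [Pi.sub_apply, apply_eq_pi_single_of_notMem hcj hcoff hi, hg_single T j hT hj i hi,
        sub_self]
  · exact hT.linearIndependent_and_span_eq_ker (fun j => (hg T j hT (Finset.mem_compl.mp j.2)).1)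
      fun j => hg_single T j hT (Finset.mem_compl.mp j.2)
  · rw [famWedge_eq_sum_cbDet_smul_eWedge]
    refine Finset.sum_congr rfl fun T _ => ?_
    split_ifs with hT
    · rfl
    · rw [cbDet_eq_zero_of_not_isMBasis hb hγ_span hT, zero_smul]

/-- **Fundamental circuits and the circuit–basis identity for linear matroids.**
Let `M` be a matroid of rank `n` on `S`, represented by `R` with kernel `Z` of
dimension `b`.  (a) For each basis `T` of `M` and `j ∉ T` there is a unique element
`γ(T,j) ∈ Z` with coefficient `1` on `e_j` and supported on `T ∪ {j}`, and the family
`𝒵_T = (γ(T,j))_{j ∉ T}` is a linear basis of `Z`.  (b) For any basis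
`𝒵 = (γ₁,…,γ_b)` of `Z`, one has, in `⋀^b E`,
`γ₁ ∧ … ∧ γ_b = Σ_{T basis of M} det(𝒵/𝒵_T) • e_{T^c}`. -/
theorem circuit_basis_identity
    {𝕂 : Type*} [Field 𝕂] {S : Type*} [Fintype S] [DecidableEq S] [LinearOrder S]
    {F : Type*} [AddCommGroup F] [Module 𝕂 F]
    (R : (S → 𝕂) →ₗ[𝕂] F)
    (b : ℕ) (hb : Module.finrank 𝕂 (LinearMap.ker R) = b)
    -- the fundamental circuit elements `γ(T,j)`
    (g : Finset S → S → (S → 𝕂))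
    (hg : ∀ T j, IsMBasis R T → j ∉ T →
      R (g T j) = 0 ∧ g T j j = 1 ∧ ∀ i, i ∉ T → i ≠ j → g T j i = 0)
    -- a basis `𝒵` of `Z = ker R`
    (γ : Fin b → (S → 𝕂))
    (hγ_indep : LinearIndependent 𝕂 γ)
    (hγ_span : Submodule.span 𝕂 (Set.range γ) = LinearMap.ker R) :
    -- uniqueness of the fundamental circuit elements
    (∀ T j, IsMBasis R T → j ∉ T →
      ∀ c : S → 𝕂, R c = 0 → c j = 1 → (∀ i, i ∉ T → i ≠ j → c i = 0) →
        c = g T j) ∧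
    -- (a) `𝒵_T` is a linear basis of `Z`
    (∀ T : Finset S, IsMBasis R T →
      LinearIndependent 𝕂 (fun j : (Tᶜ : Finset S) => g T j) ∧
      Submodule.span 𝕂 (Set.range (fun j : (Tᶜ : Finset S) => g T (j : S))) =
        LinearMap.ker R) ∧
    -- (b) the circuit–basis identity
    famWedge γ =
      ∑ T : Finset S,
        if IsMBasis R T then cbDet γ T • eWedge (Tᶜ : Finset S) else 0 :=
  circuit_basis_identity_general R b hb g hg γ hγ_span
end

section
/- Let M be a matroid of rank n on finite S, represented over K by R : E → F with Z = ker R of dimension b. Let k ∈ {0,…,b} and let K ⊆ S with |K| = n + k contain a basis of M; set Z_K = Z ∩ span(e_i : i∈K), which has dimension k. For a basis 𝒵^K = (γ_1,…,γ_k) of Z_K, one has Σ_{T basis of M, T ⊆ K} det(𝒵^K/𝒵^K_T)² · (⋀^k Z_T)(e_{K∖T}) ⊗ e_{K∖T} = (γ_1∧…∧γ_k)^{⊗2}, where 𝒵^K_T = {γ(T,j) : j ∈ K∖T} is the fundamental basis of Z_K associated with T, Z_T is the projection onto Z along E_T, and e_{K∖T} the ordered wedge of the e_j for j ∈ K∖T.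 -/
/-! Framework: a linear matroid on a finite linearly ordered set `S`, represented over
a field `𝕂` by `R : E → F` with `E = S → 𝕂`, kernel `Z = ker R`. -/

section Matroid

variable {𝕂 : Type*} [Field 𝕂] {S : Type*} [Fintype S] [DecidableEq S] [LinearOrder S]
  {F : Type*} [AddCommGroup F] [Module 𝕂 F]

/-- Vectors supported on `A ⊆ S`. -/
def suppInK (A : Finset S) : Submodule 𝕂 (S → 𝕂) where
  carrier := {c | ∀ i ∉ A, c i = 0}
  add_mem' := fun ha hb i hi => by simp [ha i hi, hb i hi]
  zero_mem' := fun i hi => rfl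
  smul_mem' := fun r c hc i hi => by simp [hc i hi]

/-- The change-of-basis determinant `det(𝒵^K/𝒵^K_T)` between a basis `γ` of `Z_K` and
the fundamental basis `𝒵^K_T = (γ(T,j))_{j ∈ K∖T}`: the determinant of the matrix of
coordinates of the `γᵢ` on `K ∖ T` (in the fixed order on `S`). -/
noncomputable def cbDetOn {n : ℕ} (γ : Fin n → (S → 𝕂)) (A : Finset S) : 𝕂 :=
  if h : (A.sort (· ≤ ·)).length = n then
    Matrix.det (Matrix.of fun i j : Fin n =>
      γ j ((A.sort (· ≤ ·)).get (Fin.cast h.symm i)))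
  else 0

end Matroid

open Classical TensorProduct

set_option linter.unusedSectionVars false

set_option linter.unusedSectionVars false in
open Finset in

theorem altMap_matrix {R M N : Type*} [CommRing R] [AddCommGroup M] [Module R M]
    [AddCommGroup N] [Module R N] {k : ℕ} (f : M [⋀^Fin k]→ₗ[R] N)
    (c : Matrix (Fin k) (Fin k) R) (v : Fin k → M) :
    f (fun i => ∑ j, c i j • v j) = c.det • f v := by
  classical
  have h1 : f (fun i => ∑ j, c i j • v j)
      = ∑ r : Fin k → Fin k, f (fun i => c i (r i) • v (r i)) :=
    f.toMultilinearMap.map_sum (g := fun i j => c i j • v j)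
  rw [h1]
  have h2 : ∀ r : Fin k → Fin k, f (fun i => c i (r i) • v (r i))
      = (∏ i, c i (r i)) • f (fun i => v (r i)) := fun r =>
    f.toMultilinearMap.map_smul_univ (fun i => c i (r i)) (fun i => v (r i))
  simp only [h2]
  rw [← Finset.sum_filter_add_sum_filter_not Finset.univ (fun r => Function.Bijective r)]
  have h3 : ∑ r ∈ Finset.univ.filter (fun r => ¬ Function.Bijective r),
      (∏ i, c i (r i)) • f (fun i => v (r i)) = 0 := by
    apply Finset.sum_eq_zero
    intro r hr
    simp only [Finset.mem_filter] at hr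
    have : ¬ Function.Injective r := fun h => hr.2 (Finite.injective_iff_bijective.mp h)
    rw [Function.not_injective_iff] at this
    obtain ⟨i, j, hij, hne⟩ := this
    rw [f.map_eq_zero_of_eq (fun i => v (r i)) (congrArg v hij) hne, smul_zero]
  rw [h3, add_zero]
  rw [← Matrix.det_transpose, Matrix.det_apply]
  rw [Finset.sum_smul]
  refine (Finset.sum_nbij' (i := fun σ : Equiv.Perm (Fin k) => (σ : Fin k → Fin k))
    (j := fun r => if h : Function.Bijective r then Equiv.ofBijective r h else 1)
    ?_ ?_ ?_ ?_ ?_).symm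
  · intro σ _; exact Finset.mem_filter.mpr ⟨Finset.mem_univ _, σ.bijective⟩
  · intro r hr; simp
  · intro σ _
    simp only [σ.bijective, dif_pos]
    ext i; simp [Equiv.ofBijective]
  · intro r hr
    simp only [Finset.mem_filter] at hr
    simp only [hr.2, dif_pos]
    rfl
  · intro σ _
    have h5 : f (fun i => v (σ i)) = Equiv.Perm.sign σ • f v := f.map_perm v σ
    rw [h5, smul_comm, ← smul_assoc]
    rfl

section AuxMatroid

variable {𝕂 : Type*} [Field 𝕂] {S : Type*} [Fintype S] [DecidableEq S] [LinearOrder S]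
  {F : Type*} [AddCommGroup F] [Module 𝕂 F]

lemma famWedge_eq {k : ℕ} (γ : Fin k → (S → 𝕂)) :
    famWedge γ = ExteriorAlgebra.ιMulti 𝕂 k γ := by
  rw [famWedge, ExteriorAlgebra.ιMulti_apply, listWedge, ← List.ofFn_eq_map, List.map_ofFn]
  rfl

lemma listWedge_sort_map (f : S → (S → 𝕂)) (A : Finset S) {k : ℕ} (h : A.card = k) :
    listWedge ((A.sort (· ≤ ·)).map f)
      = ExteriorAlgebra.ιMulti 𝕂 k (fun i => f (A.orderEmbOfFin h i)) := by
  rw [ExteriorAlgebra.ιMulti_apply, listWedge, List.map_map]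
  have hl : (A.sort (· ≤ ·)).length = k := by rw [Finset.length_sort, h]
  have : (List.ofFn fun i : Fin k => ExteriorAlgebra.ι 𝕂 (f (A.orderEmbOfFin h i)))
      = (A.sort (· ≤ ·)).map (ExteriorAlgebra.ι 𝕂 ∘ f) := by
    apply List.ext_get (by simp [hl])
    intro n h1 h2
    simp [Finset.orderEmbOfFin_apply]
  rw [this]

lemma eWedge_eq (A : Finset S) {k : ℕ} (h : A.card = k) :
    eWedge A = ExteriorAlgebra.ιMulti 𝕂 k
      (fun i => (Pi.single (A.orderEmbOfFin h i) (1:𝕂) : S → 𝕂)) :=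
  listWedge_sort_map _ A h

lemma cbDetOn_eq {k : ℕ} (γ : Fin k → (S → 𝕂)) (A : Finset S) (h : A.card = k) :
    cbDetOn γ A = Matrix.det (Matrix.of fun i j : Fin k => γ j (A.orderEmbOfFin h i)) := by
  have hl : (A.sort (· ≤ ·)).length = k := by rw [Finset.length_sort, h]
  rw [cbDetOn, dif_pos hl]
  congr 1

lemma cbDetOn_of_card_ne {k : ℕ} (γ : Fin k → (S → 𝕂)) (A : Finset S) (h : A.card ≠ k) :
    cbDetOn γ A = 0 := by
  rw [cbDetOn, dif_neg]
  rwa [Finset.length_sort]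

lemma iMulti_expansion {k : ℕ} (γ : Fin k → (S → 𝕂)) :
    ExteriorAlgebra.ιMulti 𝕂 k γ = ∑ A : Finset S, cbDetOn γ A • eWedge A := by
  classical
  have hγ : γ = fun i => ∑ s : S, γ i s • (Pi.single s 1 : S → 𝕂) := by
    funext i
    rw [show (∑ s : S, γ i s • (Pi.single s 1 : S → 𝕂))
        = ∑ s : S, (Pi.single s (γ i s) : S → 𝕂) from Finset.sum_congr rfl
        (fun s _ => by rw [← Pi.single_smul, smul_eq_mul, mul_one]),
      Finset.univ_sum_single]
  conv_lhs => rw [hγ]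
  have h1 : (ExteriorAlgebra.ιMulti 𝕂 k (fun i => ∑ s : S, γ i s • (Pi.single s 1 : S → 𝕂)))
      = ∑ r : Fin k → S, ExteriorAlgebra.ιMulti 𝕂 k
          (fun i => γ i (r i) • (Pi.single (r i) 1 : S → 𝕂)) :=
    (ExteriorAlgebra.ιMulti 𝕂 k).toMultilinearMap.map_sum
      (g := fun i s => γ i s • (Pi.single s 1 : S → 𝕂))
  rw [h1]
  have h2 : ∀ r : Fin k → S, ExteriorAlgebra.ιMulti 𝕂 k
        (fun i => γ i (r i) • (Pi.single (r i) 1 : S → 𝕂))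
      = (∏ i, γ i (r i)) • ExteriorAlgebra.ιMulti 𝕂 k
          (fun i => (Pi.single (r i) 1 : S → 𝕂)) := fun r =>
    (ExteriorAlgebra.ιMulti 𝕂 k).toMultilinearMap.map_smul_univ _ _
  simp only [h2]
  rw [← Finset.sum_fiberwise Finset.univ (fun r : Fin k → S => Finset.image r Finset.univ)
    (fun r => (∏ i, γ i (r i)) • ExteriorAlgebra.ιMulti 𝕂 k
      (fun i => (Pi.single (r i) 1 : S → 𝕂)))]
  apply Finset.sum_congr rfl
  intro A _
  by_cases hA : A.card = k
  · rw [cbDetOn_eq γ A hA, eWedge_eq A hA, Matrix.det_apply, Finset.sum_smul]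
    refine (Finset.sum_nbij' (i := fun σ : Equiv.Perm (Fin k) => A.orderEmbOfFin hA ∘ σ)
      (j := fun r => if hr : ∃ σ : Equiv.Perm (Fin k), A.orderEmbOfFin hA ∘ σ = r
        then hr.choose else 1) ?_ ?_ ?_ ?_ ?_).symm
    · intro σ _
      refine Finset.mem_filter.mpr ⟨Finset.mem_univ _, ?_⟩
      have him : Finset.image (⇑(A.orderEmbOfFin hA)) Finset.univ = A := by
        ext x
        simp only [Finset.mem_image, Finset.mem_univ, true_and]
        constructor
        · rintro ⟨i, rfl⟩; exact Finset.orderEmbOfFin_mem A hA i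
        · intro hx
          have : x ∈ Set.range (A.orderEmbOfFin hA) := by
            rw [Finset.range_orderEmbOfFin]; exact hx
          obtain ⟨i, hi⟩ := this
          exact ⟨i, hi⟩
      calc Finset.image (⇑(A.orderEmbOfFin hA) ∘ ⇑σ) Finset.univ
          = Finset.image (⇑(A.orderEmbOfFin hA)) (Finset.image (⇑σ) Finset.univ) :=
            (Finset.image_image).symm
        _ = Finset.image (⇑(A.orderEmbOfFin hA)) Finset.univ := by
            rw [Finset.image_univ_equiv]
        _ = A := him
    · intro r hr; exact Finset.mem_univ _
    · intro σ _
      have hex : ∃ σ' : Equiv.Perm (Fin k),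
          A.orderEmbOfFin hA ∘ σ' = A.orderEmbOfFin hA ∘ σ := ⟨σ, rfl⟩
      simp only [dif_pos hex]
      apply Equiv.ext
      intro i
      exact (A.orderEmbOfFin hA).injective (congrFun hex.choose_spec i)
    · intro r hr
      simp only [Finset.mem_filter] at hr
      have hmem : ∀ i, r i ∈ A := fun i => by
        rw [← hr.2]; exact Finset.mem_image_of_mem r (Finset.mem_univ i)
      have hinj : Function.Injective r := by
        have hcard : (Finset.image r Finset.univ).card = (Finset.univ : Finset (Fin k)).card := by
          rw [hr.2, hA, Finset.card_univ, Fintype.card_fin]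
        intro a b hab
        exact Finset.injOn_of_card_image_eq hcard (Finset.mem_univ a) (Finset.mem_univ b) hab
      set rA : Fin k → A := fun i => ⟨r i, hmem i⟩ with hrA
      have hrAinj : Function.Injective rA := fun a b hab =>
        hinj (congrArg Subtype.val hab)
      have hbij : Function.Bijective rA :=
        (Fintype.bijective_iff_injective_and_card rA).mpr
          ⟨hrAinj, by rw [Fintype.card_fin, Fintype.card_coe, hA]⟩
      have hex : ∃ σ : Equiv.Perm (Fin k), A.orderEmbOfFin hA ∘ σ = r := by
        refine ⟨(Equiv.ofBijective rA hbij).trans (A.orderIsoOfFin hA).toEquiv.symm, ?_⟩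
        funext i
        show A.orderEmbOfFin hA ((A.orderIsoOfFin hA).toEquiv.symm (rA i)) = r i
        rw [← Finset.coe_orderIsoOfFin_apply]
        show ((A.orderIsoOfFin hA) ((A.orderIsoOfFin hA).symm (rA i)) : S) = r i
        rw [OrderIso.apply_symm_apply]
      simp only [dif_pos hex]
      exact hex.choose_spec
    · intro σ _
      have h5 : ExteriorAlgebra.ιMulti 𝕂 k
            (fun i => (Pi.single ((A.orderEmbOfFin hA ∘ σ) i) 1 : S → 𝕂))
          = Equiv.Perm.sign σ • ExteriorAlgebra.ιMulti 𝕂 k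
            (fun i => (Pi.single (A.orderEmbOfFin hA i) 1 : S → 𝕂)) :=
        (ExteriorAlgebra.ιMulti 𝕂 k).map_perm
          (fun i => (Pi.single (A.orderEmbOfFin hA i) 1 : S → 𝕂)) σ
      rw [h5, smul_comm, ← smul_assoc]
      rfl
  · rw [cbDetOn_of_card_ne _ _ hA, zero_smul]
    apply Finset.sum_eq_zero
    intro r hr
    simp only [Finset.mem_filter] at hr
    have hninj : ¬ Function.Injective r := by
      intro hinj
      apply hA
      rw [← hr.2, Finset.card_image_of_injective _ hinj, Finset.card_univ, Fintype.card_fin]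
    rw [Function.not_injective_iff] at hninj
    obtain ⟨i, j, hij, hne⟩ := hninj
    rw [(ExteriorAlgebra.ιMulti 𝕂 k).map_eq_zero_of_eq _ (by rw [hij]) hne, smul_zero]
lemma sum_single_apply (T : Finset S) (c : T → 𝕂) (s : S) :
    (∑ t : T, c t • (Pi.single (t : S) 1 : S → 𝕂)) s
      = if h : s ∈ T then c ⟨s, h⟩ else 0 := by
  rw [Finset.sum_apply]
  by_cases h : s ∈ T
  · rw [dif_pos h, Finset.sum_eq_single (⟨s, h⟩ : T)]
    · simp
    · intro t _ ht
      have : (t : S) ≠ s := fun he => ht (Subtype.ext he)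
      simp [Pi.single_apply, this]
    · simp
  · rw [dif_neg h]
    apply Finset.sum_eq_zero
    intro t _
    have : (t : S) ≠ s := fun he => h (he ▸ t.2)
    simp [Pi.single_apply, this]

lemma sum_single_coords (v : S → 𝕂) (T : Finset S) (hs : ∀ s ∉ T, v s = 0) :
    ∑ t : T, v (t : S) • (Pi.single (t : S) 1 : S → 𝕂) = v := by
  funext s
  rw [sum_single_apply]
  by_cases h : s ∈ T
  · rw [dif_pos h]
  · rw [dif_neg h, hs s h]

/-- a vector in the kernel supported on an independent set is zero -/
lemma eq_zero_of_ker_supp (R : (S → 𝕂) →ₗ[𝕂] F) (v : S → 𝕂) (hker : R v = 0)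
    (T : Finset S)
    (hTind : LinearIndependent 𝕂 (fun i : T => R (Pi.single (i : S) 1)))
    (hsupp : ∀ s ∉ T, v s = 0) : v = 0 := by
  have hv : ∑ t : T, v (t : S) • (Pi.single (t : S) 1 : S → 𝕂) = v :=
    sum_single_coords v T hsupp
  have h0 : ∑ t : T, v (t : S) • R (Pi.single (t : S) 1) = 0 := by
    have h0' : R (∑ t : T, v (t : S) • (Pi.single (t : S) 1 : S → 𝕂))
        = ∑ t : T, v (t : S) • R (Pi.single (t : S) 1) := by
      rw [map_sum]
      exact Finset.sum_congr rfl fun t _ => by rw [map_smul]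
    rw [hv, hker] at h0'
    exact h0'.symm
  have := Fintype.linearIndependent_iff.mp hTind (fun t => v (t : S)) h0
  funext s
  by_cases h : s ∈ T
  · exact this ⟨s, h⟩
  · exact hsupp s h

variable {R : (S → 𝕂) →ₗ[𝕂] F} {k : ℕ} {K : Finset S} {γ : Fin k → (S → 𝕂)}

lemma gamma_mem (hγ_span : Submodule.span 𝕂 (Set.range γ) = LinearMap.ker R ⊓ suppInK K)
    (i : Fin k) : R (γ i) = 0 ∧ ∀ s ∉ K, γ i s = 0 := by
  have h : γ i ∈ LinearMap.ker R ⊓ suppInK K := by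
    rw [← hγ_span]
    exact Submodule.subset_span ⟨i, rfl⟩
  exact ⟨h.1, h.2⟩

lemma cbDetOn_vanish_not_subset
    (hγ_span : Submodule.span 𝕂 (Set.range γ) = LinearMap.ker R ⊓ suppInK K)
    {A : Finset S} (hAK : ¬ A ⊆ K) : cbDetOn γ A = 0 := by
  by_cases hcard : A.card = k
  · rw [cbDetOn_eq γ A hcard]
    obtain ⟨a, haA, haK⟩ := Finset.not_subset.mp hAK
    have : a ∈ Set.range (A.orderEmbOfFin hcard) := by
      rw [Finset.range_orderEmbOfFin]; exact haA
    obtain ⟨i₀, hi₀⟩ := this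
    apply Matrix.det_eq_zero_of_row_eq_zero i₀
    intro j
    show γ j (A.orderEmbOfFin hcard i₀) = 0
    rw [hi₀]
    exact (gamma_mem hγ_span j).2 a haK
  · exact cbDetOn_of_card_ne γ A hcard

lemma cbDetOn_vanish_not_basis
    (hγ_span : Submodule.span 𝕂 (Set.range γ) = LinearMap.ker R ⊓ suppInK K)
    {A : Finset S} (hAK : A ⊆ K) (hA : A.card = k)
    (hnb : ¬ IsMBasis R (K \ A))
    (hKcard : K.card = Module.finrank 𝕂 (LinearMap.range R) + k) :
    cbDetOn γ A = 0 := by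
  set T := K \ A with hT
  have hTcard : T.card = Module.finrank 𝕂 (LinearMap.range R) := by
    rw [hT, Finset.card_sdiff_of_subset hAK, hKcard, hA]
    omega
  have hnindep : ¬ LinearIndependent 𝕂 (fun i : T => R (Pi.single (i : S) 1)) := by
    intro h
    exact hnb ⟨hTcard, h⟩
  obtain ⟨c, hc0, t₀, hct₀⟩ := Fintype.not_linearIndependent_iff.mp hnindep
  set v : S → 𝕂 := ∑ t : T, c t • (Pi.single (t : S) 1 : S → 𝕂) with hv
  have hvapp : ∀ s : S, v s = if h : s ∈ T then c ⟨s, h⟩ else 0 := fun s =>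
    sum_single_apply T c s
  have hvker : R v = 0 := by
    rw [hv, map_sum]
    rw [show ∑ t : T, R (c t • (Pi.single (t : S) 1 : S → 𝕂))
        = ∑ t : T, c t • R (Pi.single (t : S) 1) from
      Finset.sum_congr rfl fun t _ => by rw [map_smul]]
    exact hc0
  have hvmem : v ∈ Submodule.span 𝕂 (Set.range γ) := by
    rw [hγ_span]
    refine ⟨hvker, fun s hs => ?_⟩
    rw [hvapp s, dif_neg (fun hsT => hs (Finset.sdiff_subset hsT))]
  obtain ⟨d, hd⟩ := (Submodule.mem_span_range_iff_exists_fun 𝕂).mp hvmem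
  have hd0 : d ≠ 0 := by
    intro h
    rw [h] at hd
    simp only [Pi.zero_apply, zero_smul, Finset.sum_const_zero] at hd
    apply hct₀
    have := hvapp (t₀ : S)
    rw [← hd, dif_pos t₀.2] at this
    rw [show (⟨(t₀ : S), t₀.2⟩ : T) = t₀ from Subtype.ext rfl] at this
    rw [← this]
    rfl
  rw [cbDetOn_eq γ A hA]
  apply (Matrix.exists_mulVec_eq_zero_iff).mp
  refine ⟨d, hd0, ?_⟩
  funext i
  have hmi : A.orderEmbOfFin hA i ∉ T := fun hmem =>
    (Finset.mem_sdiff.mp hmem).2 (Finset.orderEmbOfFin_mem A hA i)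
  have : v (A.orderEmbOfFin hA i) = 0 := by rw [hvapp, dif_neg hmi]
  rw [← hd] at this
  rw [Finset.sum_apply] at this
  simp only [Matrix.mulVec, dotProduct, Matrix.of_apply, Pi.zero_apply]
  rw [← this]
  exact Finset.sum_congr rfl fun j _ => by simp [mul_comm]

lemma famWedge_eq_det_smul
    (g : Finset S → S → (S → 𝕂))
    (hg : ∀ T j, IsMBasis R T → j ∉ T →
      R (g T j) = 0 ∧ g T j j = 1 ∧ ∀ i, i ∉ T → i ≠ j → g T j i = 0)
    (hγ_span : Submodule.span 𝕂 (Set.range γ) = LinearMap.ker R ⊓ suppInK K)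
    {T : Finset S} (hT : IsMBasis R T) (hTK : T ⊆ K) (hA : (K \ T).card = k) :
    famWedge γ = cbDetOn γ (K \ T) •
      listWedge (((K \ T).sort (· ≤ ·)).map (g T)) := by
  set A := K \ T with hAdef
  set m := A.orderEmbOfFin hA with hm
  set G : Fin k → (S → 𝕂) := fun j => g T (m j) with hG
  have hmA : ∀ j, m j ∈ A := fun j => Finset.orderEmbOfFin_mem A hA j
  have hmnT : ∀ j, m j ∉ T := fun j => (Finset.mem_sdiff.mp (hmA j)).2
  have hmK : ∀ j, m j ∈ K := fun j => (Finset.mem_sdiff.mp (hmA j)).1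
  have hGprop : ∀ j, R (G j) = 0 ∧ G j (m j) = 1 ∧
      ∀ s, s ∉ T → s ≠ m j → G j s = 0 := fun j => hg T (m j) hT (hmnT j)
  have claim : ∀ i, γ i = ∑ j, γ i (m j) • G j := by
    intro i
    have hdiff : γ i - ∑ j, γ i (m j) • G j = 0 := by
      apply eq_zero_of_ker_supp R _ ?_ T hT.2
      · -- support condition
        intro s hsT
        rw [Pi.sub_apply, Finset.sum_apply]
        by_cases hsK : s ∈ K
        · have hsA : s ∈ A := Finset.mem_sdiff.mpr ⟨hsK, hsT⟩
          have : s ∈ Set.range m := by rw [hm, Finset.range_orderEmbOfFin]; exact hsA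
          obtain ⟨j₀, hj₀⟩ := this
          rw [Finset.sum_eq_single j₀]
          · rw [← hj₀]
            simp only [Pi.smul_apply, smul_eq_mul]
            rw [(hGprop j₀).2.1, mul_one, sub_self]
          · intro j _ hjne
            have hne : s ≠ m j := by
              rw [← hj₀]
              exact fun he => hjne (m.injective he.symm)
            simp only [Pi.smul_apply, smul_eq_mul]
            rw [(hGprop j).2.2 s hsT hne, mul_zero]
          · simp
        · have h1 : γ i s = 0 := (gamma_mem hγ_span i).2 s hsK
          rw [h1, zero_sub, neg_eq_zero]
          apply Finset.sum_eq_zero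
          intro j _
          have hne : s ≠ m j := fun he => hsK (he ▸ hmK j)
          simp only [Pi.smul_apply, smul_eq_mul]
          rw [(hGprop j).2.2 s hsT hne, mul_zero]
      · -- kernel condition
        rw [map_sub, (gamma_mem hγ_span i).1, map_sum, zero_sub, neg_eq_zero]
        apply Finset.sum_eq_zero
        intro j _
        rw [map_smul, (hGprop j).1, smul_zero]
    exact sub_eq_zero.mp hdiff
  have hC : ExteriorAlgebra.ιMulti 𝕂 k γ
      = (Matrix.det (Matrix.of fun i j : Fin k => γ i (m j))) •
        ExteriorAlgebra.ιMulti 𝕂 k G := by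
    conv_lhs => rw [show γ = fun i => ∑ j, (Matrix.of fun i j : Fin k => γ i (m j)) i j • G j
      from funext claim]
    exact altMap_matrix (ExteriorAlgebra.ιMulti 𝕂 k) _ G
  rw [famWedge_eq, hC, listWedge_sort_map (g T) A hA]
  congr 1
  rw [cbDetOn_eq γ A hA, ← Matrix.det_transpose]
  congr 1

end AuxMatroid

set_option maxHeartbeats 1000000 in
/-- **The tensor-square circuit–basis identity for restricted linear matroids.**
Let `M` be a matroid of rank `n` on `S` represented by `R` with kernel `Z`, let
`K ⊆ S` with `|K| = n + k` contain a basis of `M`, and set `Z_K = Z ∩ E_K` (of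
dimension `k`), with basis `𝒵^K = (γ₁,…,γ_k)`.  Then, in `(⋀^k E)^{⊗2}`,
`Σ_{T basis of M, T ⊆ K} det(𝒵^K/𝒵^K_T)² • (⋀^k Z_T)(e_{K∖T}) ⊗ e_{K∖T}
  = (γ₁∧…∧γ_k)^{⊗2}`,
where `(⋀^k Z_T)(e_{K∖T})` is the wedge of the fundamental circuits
`γ(T,j), j ∈ K∖T`. -/
theorem tensor_square_circuit_basis_identity
    {𝕂 : Type*} [Field 𝕂] {S : Type*} [Fintype S] [DecidableEq S] [LinearOrder S]
    {F : Type*} [AddCommGroup F] [Module 𝕂 F]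
    (R : (S → 𝕂) →ₗ[𝕂] F)
    -- the fundamental circuit elements `γ(T,j)`
    (g : Finset S → S → (S → 𝕂))
    (hg : ∀ T j, IsMBasis R T → j ∉ T →
      R (g T j) = 0 ∧ g T j j = 1 ∧ ∀ i, i ∉ T → i ≠ j → g T j i = 0)
    (k : ℕ) (K : Finset S)
    (hK : K.card = Module.finrank 𝕂 (LinearMap.range R) + k)
    (hKbasis : ∃ T, IsMBasis R T ∧ T ⊆ K)
    -- a basis `𝒵^K` of `Z_K = Z ∩ E_K`
    (γ : Fin k → (S → 𝕂))
    (hγ_indep : LinearIndependent 𝕂 γ)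
    (hγ_span : Submodule.span 𝕂 (Set.range γ) = LinearMap.ker R ⊓ suppInK K) :
    (∑ T : Finset S,
        if IsMBasis R T ∧ T ⊆ K then
          (cbDetOn γ (K \ T)) ^ 2 •
            ((listWedge (((K \ T).sort (· ≤ ·)).map (g T))) ⊗ₜ[𝕂]
              (eWedge (K \ T)))
        else 0) =
      (famWedge γ) ⊗ₜ[𝕂] (famWedge γ) := by
  classical
  have hcard_KT : ∀ T : Finset S, IsMBasis R T → T ⊆ K → (K \ T).card = k := by
    intro T hT hTK
    rw [Finset.card_sdiff_of_subset hTK, hK, hT.1]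
    omega
  have step1 : famWedge γ = ∑ T : Finset S,
      (if IsMBasis R T ∧ T ⊆ K then cbDetOn γ (K \ T) • eWedge (K \ T) else 0) := by
    rw [famWedge_eq, iMulti_expansion]
    have hvanish : ∀ A ∈ (Finset.univ : Finset (Finset S)),
        cbDetOn γ A • (eWedge A : ExteriorAlgebra 𝕂 (S → 𝕂)) ≠ 0 → (A ⊆ K ∧ IsMBasis R (K \ A)) := by
      intro A _ hne
      by_contra hcon
      apply hne
      by_cases h1 : A ⊆ K
      · by_cases h2 : A.card = k
        · rw [cbDetOn_vanish_not_basis hγ_span h1 h2 (fun hb => hcon ⟨h1, hb⟩) hK, zero_smul]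
        · rw [cbDetOn_of_card_ne γ A h2, zero_smul]
      · rw [cbDetOn_vanish_not_subset hγ_span h1, zero_smul]
    rw [← Finset.sum_filter_of_ne hvanish]
    rw [show (∑ T : Finset S,
        (if IsMBasis R T ∧ T ⊆ K then cbDetOn γ (K \ T) • eWedge (K \ T) else 0))
      = ∑ T ∈ Finset.univ.filter (fun T => IsMBasis R T ∧ T ⊆ K),
          cbDetOn γ (K \ T) • eWedge (K \ T) from (Finset.sum_filter _ _).symm]
    refine Finset.sum_nbij' (i := fun A => K \ A) (j := fun T => K \ T) ?_ ?_ ?_ ?_ ?_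
    · intro A hA
      rw [Finset.mem_filter] at hA ⊢
      exact ⟨Finset.mem_univ _, hA.2.2, Finset.sdiff_subset⟩
    · intro T hT
      rw [Finset.mem_filter] at hT ⊢
      refine ⟨Finset.mem_univ _, Finset.sdiff_subset, ?_⟩
      rw [Finset.sdiff_sdiff_eq_self hT.2.2]
      exact hT.2.1
    · intro A hA
      rw [Finset.mem_filter] at hA
      exact Finset.sdiff_sdiff_eq_self hA.2.1
    · intro T hT
      rw [Finset.mem_filter] at hT
      exact Finset.sdiff_sdiff_eq_self hT.2.2
    · intro A hA
      rw [Finset.mem_filter] at hA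
      rw [Finset.sdiff_sdiff_eq_self hA.2.1]
  calc (∑ T : Finset S,
        if IsMBasis R T ∧ T ⊆ K then
          (cbDetOn γ (K \ T)) ^ 2 •
            ((listWedge (((K \ T).sort (· ≤ ·)).map (g T))) ⊗ₜ[𝕂]
              (eWedge (K \ T)))
        else 0)
      = ∑ T : Finset S,
        (if IsMBasis R T ∧ T ⊆ K then
          (famWedge γ) ⊗ₜ[𝕂] (cbDetOn γ (K \ T) • eWedge (K \ T)) else 0) := by
        apply Finset.sum_congr rfl
        intro T _
        by_cases hP : IsMBasis R T ∧ T ⊆ K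
        · rw [if_pos hP, if_pos hP]
          have hcb := famWedge_eq_det_smul g hg hγ_span hP.1 hP.2 (hcard_KT T hP.1 hP.2)
          have key : ∀ (d : 𝕂) (x y : ExteriorAlgebra 𝕂 (S → 𝕂)),
              (d • x) ⊗ₜ[𝕂] (d • y) = d ^ 2 • (x ⊗ₜ[𝕂] y) := by
            intro d x y
            rw [← TensorProduct.smul_tmul', TensorProduct.tmul_smul, smul_smul, ← pow_two]
          rw [hcb, key]
        · rw [if_neg hP, if_neg hP]
    _ = (famWedge γ) ⊗ₜ[𝕂] (∑ T : Finset S,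
          (if IsMBasis R T ∧ T ⊆ K then cbDetOn γ (K \ T) • eWedge (K \ T) else 0)) := by
        rw [TensorProduct.tmul_sum]
        apply Finset.sum_congr rfl
        intro T _
        by_cases hP : IsMBasis R T ∧ T ⊆ K
        · rw [if_pos hP, if_pos hP]
        · rw [if_neg hP, if_neg hP, TensorProduct.tmul_zero]
    _ = (famWedge γ) ⊗ₜ[𝕂] (famWedge γ) := by rw [← step1]
end
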